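/- Let S ∈ ℝ^{p×m} with p ≥ m, and let U Λ U^T be the truncated eigendecomposition of S S^T (U ∈ ℝ^{p×m} with orthonormal columns, Λ ∈ ℝ^{m×m} diagonal positive definite). Then for any invertible H ∈ ℝ^{p×p}, the Moore–Penrose pseudoinverse satisfies λ_max((H S S^T)^†) ≤ λ_max((S S^T)^†) · λ_max(H⁻¹), provided H is symmetric positive definite. -/

import Mathlib

/-!
Let `M = H S Sᵀ`, `A = S Sᵀ` and let `P x = μ x` with `μ ≠ 0`. The Penrose equations give
`P (M x) = x`, and since `M P` is the orthogonal projection onto the range of `M`, also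
`x ⬝ u = μ ‖u‖²` for `u = M x`. Moreover `x = (P M)ᵀ x` lies in the range of `Mᵀ = A H`, on which
`Q A` is the identity, so `x = Q H⁻¹ u`. Bounding the norms of `Q` and `H⁻¹` by their largest
eigenvalues, Cauchy–Schwarz gives `μ ‖u‖² ≤ ‖x‖ ‖u‖ ≤ λ_max(Q) λ_max(H⁻¹) ‖u‖²`.
-/

open Matrix

/-- `P` is the Moore–Penrose pseudoinverse of `M` (Penrose conditions). -/
def IsMoorePenrose {p : ℕ} (M P : Matrix (Fin p) (Fin p) ℝ) : Prop :=
  M * P * M = M ∧ P * M * P = P ∧ (M * P)ᵀ = M * P ∧ (P * M)ᵀ = P * M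

section Norms

variable {n : Type*} [Fintype n]

lemma le_of_dotProduct_eq_mul_of_dotProduct_self_le {x u : n → ℝ} {μ c : ℝ}
    (hxu : x ⬝ᵥ u = μ * (u ⬝ᵥ u)) (hx : x ⬝ᵥ x ≤ c ^ 2 * (u ⬝ᵥ u)) (hu : u ≠ 0) (hc : 0 ≤ c) :
    μ ≤ c := by
  have huu : 0 < u ⬝ᵥ u :=
    lt_of_le_of_ne (dotProduct_self_star_nonneg u) (Ne.symm (dotProduct_self_eq_zero.not.mpr hu))
  have hcs : (x ⬝ᵥ u) ^ 2 ≤ (x ⬝ᵥ x) * (u ⬝ᵥ u) := by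
    simpa only [dotProduct, sq] using Finset.sum_mul_sq_le_sq_mul_sq Finset.univ x u
  have hsq : μ ^ 2 * (u ⬝ᵥ u) ^ 2 ≤ c ^ 2 * (u ⬝ᵥ u) ^ 2 := calc
    μ ^ 2 * (u ⬝ᵥ u) ^ 2 = (x ⬝ᵥ u) ^ 2 := by rw [hxu]; ring
    _ ≤ (x ⬝ᵥ x) * (u ⬝ᵥ u) := hcs
    _ ≤ c ^ 2 * (u ⬝ᵥ u) * (u ⬝ᵥ u) := mul_le_mul_of_nonneg_right hx huu.le
    _ = c ^ 2 * (u ⬝ᵥ u) ^ 2 := by ring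
  exact le_of_sq_le_sq (le_of_mul_le_mul_right hsq (by positivity)) hc

variable [DecidableEq n]

lemma Matrix.dotProduct_mulVec_mulVec_of_mem_unitaryGroup {U : Matrix n n ℝ}
    (hU : U ∈ unitaryGroup n ℝ) (v w : n → ℝ) : (U *ᵥ v) ⬝ᵥ (U *ᵥ w) = v ⬝ᵥ w := by
  have hUU : Uᵀ * U = 1 := by
    simpa [star_eq_conjTranspose] using mem_unitaryGroup_iff'.mp hU
  rw [← vecMul_transpose, ← dotProduct_mulVec, mulVec_mulVec, hUU, one_mulVec]

lemma Matrix.IsHermitian.mulVec_dotProduct_mulVec_le {B : Matrix n n ℝ} (hB : B.IsHermitian)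
    {c : ℝ} (hc : ∀ i, |hB.eigenvalues i| ≤ c) (w : n → ℝ) :
    (B *ᵥ w) ⬝ᵥ (B *ᵥ w) ≤ c ^ 2 * (w ⬝ᵥ w) := by
  set U : Matrix n n ℝ := ↑hB.eigenvectorUnitary
  have hU : U ∈ unitaryGroup n ℝ := hB.eigenvectorUnitary.2
  set v := star U *ᵥ w
  have hw : w = U *ᵥ v := by
    rw [mulVec_mulVec, mem_unitaryGroup_iff.mp hU, one_mulVec]
  have hBw : B *ᵥ w = U *ᵥ (diagonal hB.eigenvalues *ᵥ v) := by
    conv_lhs => rw [hB.spectral_theorem, Unitary.conjStarAlgAut_apply]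
    rw [mulVec_mulVec, mulVec_mulVec]
    rfl
  rw [hBw, hw, dotProduct_mulVec_mulVec_of_mem_unitaryGroup hU,
    dotProduct_mulVec_mulVec_of_mem_unitaryGroup hU, dotProduct, dotProduct, Finset.mul_sum]
  refine Finset.sum_le_sum fun i _ => ?_
  rw [mulVec_diagonal, ← sq, ← sq, mul_pow, ← sq_abs (hB.eigenvalues i)]
  exact mul_le_mul_of_nonneg_right (pow_le_pow_left₀ (abs_nonneg _) (hc i) 2) (sq_nonneg _)

lemma Matrix.PosSemidef.iSup_eigenvalues_nonneg {B : Matrix n n ℝ} (hB : B.PosSemidef) :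
    0 ≤ ⨆ i, hB.1.eigenvalues i :=
  Real.iSup_nonneg hB.eigenvalues_nonneg

lemma Matrix.PosSemidef.mulVec_dotProduct_mulVec_le {B : Matrix n n ℝ} (hB : B.PosSemidef)
    (w : n → ℝ) : (B *ᵥ w) ⬝ᵥ (B *ᵥ w) ≤ (⨆ i, hB.1.eigenvalues i) ^ 2 * (w ⬝ᵥ w) :=
  hB.1.mulVec_dotProduct_mulVec_le (fun i => (abs_of_nonneg (hB.eigenvalues_nonneg i)).trans_le
    (le_ciSup (Set.finite_range _).bddAbove i)) w

end Norms

namespace IsMoorePenrose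

variable {p : ℕ} {M P : Matrix (Fin p) (Fin p) ℝ}

lemma mul_mul_transpose (h : IsMoorePenrose M P) : P * M * Mᵀ = Mᵀ := by
  conv_lhs => rw [← h.2.2.2]
  rw [← transpose_mul, ← Matrix.mul_assoc, h.1]

lemma mulVec_mulVec_of_mulVec_eq_smul (h : IsMoorePenrose M P) {μ : ℝ} {x : Fin p → ℝ}
    (hx : P *ᵥ x = μ • x) (hμ : μ ≠ 0) : P *ᵥ (M *ᵥ x) = x := by
  have hx' : x = μ⁻¹ • P *ᵥ x := by rw [hx, inv_smul_smul₀ hμ]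
  rw [hx', mulVec_smul, mulVec_smul, mulVec_mulVec, mulVec_mulVec, h.2.1]

lemma transpose_mulVec_transpose_mulVec (h : IsMoorePenrose M P) {x : Fin p → ℝ}
    (hx : P *ᵥ (M *ᵥ x) = x) : Mᵀ *ᵥ (Pᵀ *ᵥ x) = x := by
  rw [mulVec_mulVec, ← transpose_mul, h.2.2.2, ← mulVec_mulVec, hx]

lemma dotProduct_mulVec_of_mulVec_eq_smul (h : IsMoorePenrose M P) {μ : ℝ} {x : Fin p → ℝ}
    (hx : P *ᵥ x = μ • x) : x ⬝ᵥ (M *ᵥ x) = μ * ((M *ᵥ x) ⬝ᵥ (M *ᵥ x)) := calc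
  x ⬝ᵥ (M *ᵥ x) = x ⬝ᵥ ((M * P) *ᵥ (M *ᵥ x)) := by rw [mulVec_mulVec, h.1]
  _ = ((M * P)ᵀ *ᵥ x) ⬝ᵥ (M *ᵥ x) := by rw [dotProduct_mulVec, mulVec_transpose]
  _ = μ * ((M *ᵥ x) ⬝ᵥ (M *ᵥ x)) := by
    rw [h.2.2.1, ← mulVec_mulVec, hx, mulVec_smul, smul_dotProduct, smul_eq_mul]

lemma posSemidef {m : ℕ} {S : Matrix (Fin p) (Fin m) ℝ} (h : IsMoorePenrose (S * Sᵀ) P)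
    (hP : P.IsHermitian) : P.PosSemidef := by
  have hPt : Pᵀ = P := by rwa [← conjTranspose_eq_transpose_of_trivial]
  have hPS : (P * S) * (P * S)ᴴ = P := by
    rw [conjTranspose_eq_transpose_of_trivial, transpose_mul, hPt, Matrix.mul_assoc,
      ← Matrix.mul_assoc S, ← Matrix.mul_assoc, h.2.1]
  exact hPS ▸ posSemidef_self_mul_conjTranspose (P * S)

lemma mulVec_inv_mulVec_of_mulVec_eq_smul {A H Q : Matrix (Fin p) (Fin p) ℝ}
    (hP : IsMoorePenrose (H * A) P) (hQ : IsMoorePenrose A Q) (hA : A.IsSymm) (hH : H.IsSymm)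
    (hdet : IsUnit H.det) {μ : ℝ} {x : Fin p → ℝ} (hx : P *ᵥ x = μ • x) (hμ : μ ≠ 0) :
    Q *ᵥ (H⁻¹ *ᵥ ((H * A) *ᵥ x)) = x := by
  have hx_range : A *ᵥ (H *ᵥ (Pᵀ *ᵥ x)) = x := by
    have := hP.transpose_mulVec_transpose_mulVec (hP.mulVec_mulVec_of_mulVec_eq_smul hx hμ)
    rwa [transpose_mul, hA.eq, hH.eq, ← mulVec_mulVec] at this
  have hQAA : Q * A * A = A := by simpa only [hA.eq] using hQ.mul_mul_transpose
  have hHinv : H⁻¹ *ᵥ ((H * A) *ᵥ x) = A *ᵥ x := by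
    rw [mulVec_mulVec, nonsing_inv_mul_cancel_left H A hdet]
  rw [hHinv]
  conv_lhs => rw [← hx_range]
  rw [mulVec_mulVec, mulVec_mulVec, hQAA, hx_range]

end IsMoorePenrose

theorem pseudoinverse_lambda_max_bound_general
    (p m : ℕ)
    (S : Matrix (Fin p) (Fin m) ℝ) (H : Matrix (Fin p) (Fin p) ℝ)
    (hH : H.PosDef)
    (P Q : Matrix (Fin p) (Fin p) ℝ)
    (hP : IsMoorePenrose (H * S * Sᵀ) P)
    (hQ : IsMoorePenrose (S * Sᵀ) Q)
    (hQh : Q.IsHermitian) (hHinv : (H⁻¹).IsHermitian) :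
    ∀ (μ : ℝ) (x : Fin p → ℝ), x ≠ 0 → P.mulVec x = μ • x →
      μ ≤ (⨆ i, hQh.eigenvalues i) * (⨆ i, hHinv.eigenvalues i) := by
  intro μ x hx hPx
  have hQpsd : Q.PosSemidef := hQ.posSemidef hQh
  have hHinvpsd : (H⁻¹).PosSemidef := hH.inv.posSemidef
  have hbound_nonneg := mul_nonneg hQpsd.iSup_eigenvalues_nonneg hHinvpsd.iSup_eigenvalues_nonneg
  rcases eq_or_ne μ 0 with rfl | hμ
  · exact hbound_nonneg
  rw [Matrix.mul_assoc] at hP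
  set u := (H * (S * Sᵀ)) *ᵥ x
  have hxQ : Q *ᵥ (H⁻¹ *ᵥ u) = x :=
    hP.mulVec_inv_mulVec_of_mulVec_eq_smul hQ (by simp [IsSymm, transpose_mul])
      (isHermitian_iff_isSymm.mp hH.1) (isUnit_iff_isUnit_det H |>.mp hH.isUnit) hPx hμ
  have hPu : P *ᵥ u = x := hP.mulVec_mulVec_of_mulVec_eq_smul hPx hμ
  have hu : u ≠ 0 := fun hu => hx (by rw [← hPu, hu, mulVec_zero])
  refine le_of_dotProduct_eq_mul_of_dotProduct_self_le
    (hP.dotProduct_mulVec_of_mulVec_eq_smul hPx) ?_ hu hbound_nonneg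
  calc x ⬝ᵥ x = (Q *ᵥ (H⁻¹ *ᵥ u)) ⬝ᵥ (Q *ᵥ (H⁻¹ *ᵥ u)) := by rw [hxQ]
    _ ≤ (⨆ i, hQh.eigenvalues i) ^ 2 * ((H⁻¹ *ᵥ u) ⬝ᵥ (H⁻¹ *ᵥ u)) :=
      hQpsd.mulVec_dotProduct_mulVec_le _
    _ ≤ (⨆ i, hQh.eigenvalues i) ^ 2 * ((⨆ i, hHinv.eigenvalues i) ^ 2 * (u ⬝ᵥ u)) :=
      mul_le_mul_of_nonneg_left (hHinvpsd.mulVec_dotProduct_mulVec_le u) (sq_nonneg _)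
    _ = _ := by ring

/-- For `S ∈ ℝ^{p×m}` (with `p ≥ m`) and `H` symmetric positive definite, every real
eigenvalue `μ` of the Moore–Penrose pseudoinverse `(H S Sᵀ)^†` satisfies
`μ ≤ λ_max((S Sᵀ)^†) · λ_max(H⁻¹)`. -/
theorem pseudoinverse_lambda_max_bound
    (p m : ℕ) [NeZero p] (hpm : m ≤ p)
    (S : Matrix (Fin p) (Fin m) ℝ) (H : Matrix (Fin p) (Fin p) ℝ)
    (hH : H.PosDef)
    (P Q : Matrix (Fin p) (Fin p) ℝ)
    (hP : IsMoorePenrose (H * S * Sᵀ) P)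
    (hQ : IsMoorePenrose (S * Sᵀ) Q)
    (hQh : Q.IsHermitian) (hHinv : (H⁻¹).IsHermitian) :
    ∀ (μ : ℝ) (x : Fin p → ℝ), x ≠ 0 → P.mulVec x = μ • x →
      μ ≤ (⨆ i, hQh.eigenvalues i) * (⨆ i, hHinv.eigenvalues i) :=
  pseudoinverse_lambda_max_bound_general p m S H hH P Q hP hQ hQh hHinv
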